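/- Completeness of type equivalence via normalization: if Δ ⊢ T ≡ U : κ then nf⁺(T) =α nf⁺(U); moreover, for session types with Δ ⊢ T ≡ U : S, also nf⁻(T) =α nf⁻(U). -/

import Mathlib

set_option autoImplicit true

namespace AlgST

/-- Kinds: T (functional types), S (session types), P (protocols). -/
inductive Kind where
  | ty   -- T
  | se   -- S
  | pr   -- P
deriving DecidableEq

/-- Types of AlgST (type variables in de Bruijn style, so α-equivalence is =). -/
inductive Ty where
  | unit                                -- Unit
  | arr  (T U : Ty)                     -- T → U
  | pair (T U : Ty)                     -- (T, U)
  | all  (κ : Kind) (T : Ty)            -- ∀α:κ.T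
  | var  (n : ℕ)                        -- α
  | neg  (T : Ty)                       -- −T
  | out  (T S : Ty)                     -- !T.S
  | inp  (T S : Ty)                     -- ?T.S
  | endT                                -- End!
  | endW                                -- End?
  | dual (S : Ty)                       -- Dual S
  | papp (P : ℕ) (Ts : List Ty)         -- P T̄  (protocol name applied to arguments)

/-- Directional operator `+`: +(−U) = −U and +T = T otherwise. -/
def Ty.pos : Ty → Ty
  | .neg U => .neg U
  | T => T

/-- Directional operator `−`: −(−U) = +U and −T = (syntactic) −T otherwise. -/
def Ty.negd : Ty → Ty
  | .neg U => Ty.pos U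
  | T => .neg T

/-- Materialization §(T)(S): §(−U)(S) = ?U.S and §(T)(S) = !T.S otherwise. -/
def Ty.mat : Ty → Ty → Ty
  | .neg U, S => .inp U S
  | T, S => .out T S

def upRen (f : ℕ → ℕ) : ℕ → ℕ
  | 0 => 0
  | n + 1 => f n + 1

mutual
def Ty.rename (f : ℕ → ℕ) : Ty → Ty
  | .unit => .unit
  | .arr T U => .arr (T.rename f) (U.rename f)
  | .pair T U => .pair (T.rename f) (U.rename f)
  | .all κ T => .all κ (T.rename (upRen f))
  | .var n => .var (f n)
  | .neg T => .neg (T.rename f)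
  | .out T S => .out (T.rename f) (S.rename f)
  | .inp T S => .inp (T.rename f) (S.rename f)
  | .endT => .endT
  | .endW => .endW
  | .dual S => .dual (S.rename f)
  | .papp P Ts => .papp P (Ty.renameList f Ts)
def Ty.renameList (f : ℕ → ℕ) : List Ty → List Ty
  | [] => []
  | T :: Ts => T.rename f :: Ty.renameList f Ts
end

def upSub (σ : ℕ → Ty) : ℕ → Ty
  | 0 => .var 0
  | n + 1 => (σ n).rename (· + 1)

mutual
def Ty.subst (σ : ℕ → Ty) : Ty → Ty
  | .unit => .unit
  | .arr T U => .arr (T.subst σ) (U.subst σ)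
  | .pair T U => .pair (T.subst σ) (U.subst σ)
  | .all κ T => .all κ (T.subst (upSub σ))
  | .var n => σ n
  | .neg T => .neg (T.subst σ)
  | .out T S => .out (T.subst σ) (S.subst σ)
  | .inp T S => .inp (T.subst σ) (S.subst σ)
  | .endT => .endT
  | .endW => .endW
  | .dual S => .dual (S.subst σ)
  | .papp P Ts => .papp P (Ty.substList σ Ts)
def Ty.substList (σ : ℕ → Ty) : List Ty → List Ty
  | [] => []
  | T :: Ts => T.subst σ :: Ty.substList σ Ts
end

/-- Capture-avoiding substitution T[U/α] of U for the (de Bruijn) variable 0. -/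
def substTy0 (U : Ty) (T : Ty) : Ty :=
  T.subst (fun n => match n with | 0 => U | m + 1 => .var m)

/-- Simultaneous substitution T[Ū/ᾱ] of a list of types for the variables 0..n−1. -/
def substAll (Us : List Ty) (T : Ty) : Ty :=
  T.subst (fun n => (Us[n]?).getD (.var (n - Us.length)))

mutual
/-- nf⁺: normal form of a type. -/
def nfP : Ty → Ty
  | .unit => .unit
  | .arr T U => .arr (nfP T) (nfP U)
  | .pair T U => .pair (nfP T) (nfP U)
  | .all κ T => .all κ (nfP T)
  | .var n => .var n
  | .neg T => (nfP T).negd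
  | .out T S => Ty.mat (nfP T).pos (nfP S)
  | .inp T S => Ty.mat (nfP T).negd (nfP S)
  | .endT => .endT
  | .endW => .endW
  | .dual S => nfN S
  | .papp P Ts => .papp P (nfL Ts)
/-- nf⁻: normal form of the dual of a session type. -/
def nfN : Ty → Ty
  | .var n => .dual (.var n)
  | .out T S => Ty.mat (nfP T).negd (nfN S)
  | .inp T S => Ty.mat (nfP T).pos (nfN S)
  | .endT => .endW
  | .endW => .endT
  | .dual S => nfP S
  | T => nfP T
def nfL : List Ty → List Ty
  | [] => []
  | T :: Ts => nfP T :: nfL Ts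
end


mutual
/-- Number of nodes of the abstract syntax tree of a type. -/
def tsize : Ty → ℕ
  | .unit => 1
  | .arr T U => tsize T + tsize U + 1
  | .pair T U => tsize T + tsize U + 1
  | .all _ T => tsize T + 1
  | .var _ => 1
  | .neg T => tsize T + 1
  | .out T S => tsize T + tsize S + 1
  | .inp T S => tsize T + tsize S + 1
  | .endT => 1
  | .endW => 1
  | .dual S => tsize S + 1
  | .papp _ Ts => tsizeL Ts + 1
def tsizeL : List Ty → ℕ
  | [] => 0
  | T :: Ts => tsize T + tsizeL Ts
end

mutual
/-- Normal forms R of the grammar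
    R ::= Unit | R→R | (R,R) | ∀α:κ.R | α | ?R.R | !R.R | End? | End! | Dual α | P Q̄. -/
inductive IsNFR : Ty → Prop
  | unit : IsNFR .unit
  | arr : IsNFR T → IsNFR U → IsNFR (.arr T U)
  | pair : IsNFR T → IsNFR U → IsNFR (.pair T U)
  | all : IsNFR T → IsNFR (.all κ T)
  | var : IsNFR (.var n)
  | inp : IsNFR T → IsNFR S → IsNFR (.inp T S)
  | out : IsNFR T → IsNFR S → IsNFR (.out T S)
  | endW : IsNFR .endW
  | endT : IsNFR .endT
  | dualVar : IsNFR (.dual (.var n))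
  | papp : (∀ T ∈ Ts, IsNFQ T) → IsNFR (.papp P Ts)
/-- Normal forms Q ::= R | −R: at most one outermost negation. -/
inductive IsNFQ : Ty → Prop
  | r : IsNFR T → IsNFQ T
  | negR : IsNFR T → IsNFQ (.neg T)
end

/-- A protocol declaration `protocol P ᾱ = {Cᵢ T̄ᵢ}ᵢ∈I`: an arity and, for each
constructor Cᵢ, the list of its argument types (which may refer to the
parameters ᾱ as de Bruijn variables `< arity`). -/
structure ProtoDecl where
  arity : ℕ
  ctors : List (List Ty)

/-- A fixed global set of protocol declarations, indexed by protocol names. -/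
def PEnv := ℕ → Option ProtoDecl

mutual
/-- Algorithmic kind synthesis Δ ⊢ T ⇒ κ. -/
inductive KindSynth : PEnv → List Kind → Ty → Kind → Prop
  | unit : KindSynth pe Δ .unit .ty
  | arr : KindCheck pe Δ T .ty → KindCheck pe Δ U .ty → KindSynth pe Δ (.arr T U) .ty
  | pair : KindCheck pe Δ T .ty → KindCheck pe Δ U .ty → KindSynth pe Δ (.pair T U) .ty
  | all : KindCheck pe (κ :: Δ) T .ty → KindSynth pe Δ (.all κ T) .ty
  | var : Δ[n]? = some κ → KindSynth pe Δ (.var n) κ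
  | neg : KindCheck pe Δ T .pr → KindSynth pe Δ (.neg T) .pr
  | out : KindCheck pe Δ T .pr → KindCheck pe Δ S .se → KindSynth pe Δ (.out T S) .se
  | inp : KindCheck pe Δ T .pr → KindCheck pe Δ S .se → KindSynth pe Δ (.inp T S) .se
  | endT : KindSynth pe Δ .endT .se
  | endW : KindSynth pe Δ .endW .se
  | dual : KindCheck pe Δ S .se → KindSynth pe Δ (.dual S) .se
  | papp : pe P = some d → Ts.length = d.arity →
      (∀ T ∈ Ts, KindCheck pe Δ T .pr) → KindSynth pe Δ (.papp P Ts) .pr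
/-- Algorithmic kind checking Δ ⊢ T ⇐ κ (with subsumption). -/
inductive KindCheck : PEnv → List Kind → Ty → Kind → Prop
  | sub : KindSynth pe Δ T κ → KindCheck pe Δ T κ
  | seTy : KindSynth pe Δ T .se → KindCheck pe Δ T .ty      -- session types are types
  | toPr : KindCheck pe Δ T .ty → KindCheck pe Δ T .pr      -- any type lifts to a protocol
end

/-- Type conversion Δ ⊢ T ≡ U : κ, the congruent equivalence generated by the
conversion rules, including Dual(?T.S) ≡ !T.Dual S and Dual(!T.S) ≡ ?T.Dual S. -/
inductive Conv : PEnv → List Kind → Ty → Ty → Kind → Prop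
  | refl : KindCheck pe Δ T κ → Conv pe Δ T T κ
  | symm : Conv pe Δ T U κ → Conv pe Δ U T κ
  | trans : Conv pe Δ T U κ → Conv pe Δ U V κ → Conv pe Δ T V κ
  -- congruence rules
  | arr : Conv pe Δ T T' .ty → Conv pe Δ U U' .ty → Conv pe Δ (.arr T U) (.arr T' U') .ty
  | pair : Conv pe Δ T T' .ty → Conv pe Δ U U' .ty → Conv pe Δ (.pair T U) (.pair T' U') .ty
  | all : Conv pe (κ :: Δ) T T' .ty → Conv pe Δ (.all κ T) (.all κ T') .ty
  | neg : Conv pe Δ T T' .pr → Conv pe Δ (.neg T) (.neg T') .pr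
  | out : Conv pe Δ T T' .pr → Conv pe Δ S S' .se → Conv pe Δ (.out T S) (.out T' S') .se
  | inp : Conv pe Δ T T' .pr → Conv pe Δ S S' .se → Conv pe Δ (.inp T S) (.inp T' S') .se
  | dual : Conv pe Δ S S' .se → Conv pe Δ (.dual S) (.dual S') .se
  | papp : pe P = some d → Ts.length = d.arity → Ts.length = Ts'.length →
      (∀ (i : ℕ) T T', Ts[i]? = some T → Ts'[i]? = some T' → Conv pe Δ T T' .pr) →
      Conv pe Δ (.papp P Ts) (.papp P Ts') .pr
  -- axioms for duality
  | dualIn : KindCheck pe Δ T .pr → KindCheck pe Δ S .se →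
      Conv pe Δ (.dual (.inp T S)) (.out T (.dual S)) .se
  | dualOut : KindCheck pe Δ T .pr → KindCheck pe Δ S .se →
      Conv pe Δ (.dual (.out T S)) (.inp T (.dual S)) .se
  | dualEndT : Conv pe Δ (.dual .endT) .endW .se
  | dualEndW : Conv pe Δ (.dual .endW) .endT .se
  | dualDual : KindCheck pe Δ S .se → Conv pe Δ (.dual (.dual S)) S .se
  -- axioms for directions
  | outNeg : KindCheck pe Δ T .pr → KindCheck pe Δ S .se →
      Conv pe Δ (.out (.neg T) S) (.inp T S) .se
  | inpNeg : KindCheck pe Δ T .pr → KindCheck pe Δ S .se →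
      Conv pe Δ (.inp (.neg T) S) (.out T S) .se
  | negNeg : KindCheck pe Δ T .pr → Conv pe Δ (.neg (.neg T)) T .pr



/-- Sequential materialization §(T̄)(S): §(ε)(S) = S, §(T T̄)(S) = §(T)(§(T̄)(S)). -/
def matSeq (Ts : List Ty) (S : Ty) : Ty := Ts.foldr Ty.mat S

/-- Sequential materialization in the receiving direction: §(−T̄)(S). -/
def matSeqNeg (Ts : List Ty) (S : Ty) : Ty := Ts.foldr (fun T S' => Ty.mat T.negd S') S

/-- n-fold universal quantification. -/
def foralls : ℕ → Kind → Ty → Ty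
  | 0, _, T => T
  | n + 1, κ, T => .all κ (foralls n κ T)

/-- Term-level constants. -/
inductive Const where
  | unit
  | fork
  | new
  | receive
  | send
  | select (P k : ℕ)     -- select Cₖ of protocol P
  | wait
  | terminate
deriving DecidableEq

/-- typeof(select Cₖ) = ∀ᾱ:P̄.∀β:S. !(P ᾱ).β → T̄ₖ§β. -/
def typeofSelect (pe : PEnv) (P k : ℕ) : Option Ty :=
  match pe P with
  | none => none
  | some d =>
    match d.ctors[k]? with
    | none => none
    | some Ts =>
      let n := d.arity
      let params := (List.range n).map (fun i => Ty.var (i + 1))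
      some (foralls n .pr (.all .se (.arr (.out (.papp P params) (.var 0))
        (matSeq (Ts.map (Ty.rename (· + 1))) (.var 0)))))

/-- Types for constants. -/
def typeofConst (pe : PEnv) : Const → Option Ty
  | .unit => some .unit
  | .fork => some (.arr (.arr .unit .unit) .unit)
  | .new => some (.all .se (.pair (.var 0) (.dual (.var 0))))
  | .receive => some (.all .ty (.all .se (.arr (.inp (.var 1) (.var 0)) (.pair (.var 1) (.var 0)))))
  | .send => some (.all .ty (.all .se (.arr (.var 1) (.arr (.out (.var 1) (.var 0)) (.var 0)))))
  | .wait => some (.arr .endW .unit)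
  | .terminate => some (.arr .endT .unit)
  | .select P k => typeofSelect pe P k

/-- Expressions. -/
inductive Expr where
  | const (c : Const)
  | var (x : String)
  | abs (x : String) (T : Ty) (e : Expr)          -- λx:T.e
  | rec' (x : String) (T : Ty) (v : Expr)         -- rec x:T.v
  | tabs (κ : Kind) (v : Expr)                    -- Λα:κ.v
  | app (e₁ e₂ : Expr)
  | tapp (e : Expr) (T : Ty)                      -- e [T]
  | pair (e₁ e₂ : Expr)
  | letpair (x y : String) (e₁ e₂ : Expr)         -- let (x,y) = e₁ in e₂
  | letunit (e₁ e₂ : Expr)                        -- let () = e₁ in e₂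
  | matchwith (e : Expr) (bs : List (String × Expr))  -- match e with {Cᵢ xᵢ → eᵢ}

/-- Iterated type application e [T̄]. -/
def tappList (e : Expr) (Ts : List Ty) : Expr := Ts.foldl .tapp e

/-- Values. -/
inductive IsValue : Expr → Prop
  | const : IsValue (.const c)
  | var : IsValue (.var x)
  | abs : IsValue (.abs x T e)
  | rec' : IsValue v → IsValue (.rec' x T v)
  | tabs : IsValue v → IsValue (.tabs κ v)
  | pair : IsValue v → IsValue w → IsValue (.pair v w)
  | recvT : IsValue (.tapp (.const .receive) T)
  | recvTT : IsValue (.tapp (.tapp (.const .receive) T) U)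
  | sendT : IsValue (.tapp (.const .send) T)
  | sendTT : IsValue (.tapp (.tapp (.const .send) T) U)
  | sendTTv : IsValue v → IsValue (.app (.tapp (.tapp (.const .send) T) U) v)
  | selectTs : IsValue (tappList (.const (.select P k)) Ts)

mutual
/-- Capture-respecting substitution e[v/x] of value v for term variable x. -/
def esubst (v : Expr) (x : String) : Expr → Expr
  | .const c => .const c
  | .var y => if y = x then v else .var y
  | .abs y T e => .abs y T (if y = x then e else esubst v x e)
  | .rec' y T w => .rec' y T (if y = x then w else esubst v x w)
  | .tabs κ w => .tabs κ (esubst v x w)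
  | .app e₁ e₂ => .app (esubst v x e₁) (esubst v x e₂)
  | .tapp e T => .tapp (esubst v x e) T
  | .pair e₁ e₂ => .pair (esubst v x e₁) (esubst v x e₂)
  | .letpair y z e₁ e₂ =>
      .letpair y z (esubst v x e₁) (if y = x ∨ z = x then e₂ else esubst v x e₂)
  | .letunit e₁ e₂ => .letunit (esubst v x e₁) (esubst v x e₂)
  | .matchwith e bs => .matchwith (esubst v x e) (esubstBs v x bs)
def esubstBs (v : Expr) (x : String) : List (String × Expr) → List (String × Expr)
  | [] => []
  | (y, e) :: bs => (y, if y = x then e else esubst v x e) :: esubstBs v x bs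
end

mutual
/-- Substitution of types for type variables in expressions. -/
def etsub (σ : ℕ → Ty) : Expr → Expr
  | .const c => .const c
  | .var y => .var y
  | .abs y T e => .abs y (T.subst σ) (etsub σ e)
  | .rec' y T w => .rec' y (T.subst σ) (etsub σ w)
  | .tabs κ w => .tabs κ (etsub (upSub σ) w)
  | .app e₁ e₂ => .app (etsub σ e₁) (etsub σ e₂)
  | .tapp e T => .tapp (etsub σ e) (T.subst σ)
  | .pair e₁ e₂ => .pair (etsub σ e₁) (etsub σ e₂)
  | .letpair y z e₁ e₂ => .letpair y z (etsub σ e₁) (etsub σ e₂)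
  | .letunit e₁ e₂ => .letunit (etsub σ e₁) (etsub σ e₂)
  | .matchwith e bs => .matchwith (etsub σ e) (etsubBs σ bs)
def etsubBs (σ : ℕ → Ty) : List (String × Expr) → List (String × Expr)
  | [] => []
  | (y, e) :: bs => (y, etsub σ e) :: etsubBs σ bs
end

/-- e[T/α]: substitution of T for the type variable 0 in an expression. -/
def etsubst0 (T : Ty) (e : Expr) : Expr :=
  etsub (fun n => match n with | 0 => T | m + 1 => .var m) e

mutual
/-- Free term variables of an expression. -/
def FVE : Expr → Set String
  | .const _ => ∅
  | .var x => {x}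
  | .abs y _ e => FVE e \ {y}
  | .rec' y _ w => FVE w \ {y}
  | .tabs _ w => FVE w
  | .app e₁ e₂ => FVE e₁ ∪ FVE e₂
  | .tapp e _ => FVE e
  | .pair e₁ e₂ => FVE e₁ ∪ FVE e₂
  | .letpair y z e₁ e₂ => FVE e₁ ∪ (FVE e₂ \ {y, z})
  | .letunit e₁ e₂ => FVE e₁ ∪ FVE e₂
  | .matchwith e bs => FVE e ∪ FVEBs bs
def FVEBs : List (String × Expr) → Set String
  | [] => ∅
  | (y, e) :: bs => (FVE e \ {y}) ∪ FVEBs bs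
end


/-- Multiplicity of a context entry: linear `x:T` or unrestricted `x:*T`. -/
inductive Mult where
  | lin | un
deriving DecidableEq

/-- Term variable contexts. -/
abbrev Ctx := List (String × Mult × Ty)

/-- x does not occur in Γ. -/
def notIn (x : String) (Γ : Ctx) : Prop := ∀ b ∈ Γ, b.1 ≠ x

/-- Δ ⊢ Γ ⇐ T: pointwise well-kindedness of a typing context at the kind T of types. -/
def CtxWf (pe : PEnv) (Δ : List Kind) (Γ : Ctx) : Prop :=
  ∀ b ∈ Γ, KindCheck pe Δ b.2.2 .ty

/-- Γ^S: every binding has a session type. -/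
def SessionCtx (pe : PEnv) (Δ : List Kind) (Γ : Ctx) : Prop :=
  ∀ b ∈ Γ, KindCheck pe Δ b.2.2 .se

mutual
/-- Algorithmic type synthesis Δ;Γ₁ ⊢ e ⇒ T ⊣ Γ₂ (with leftover context Γ₂). -/
inductive ExpSynth : PEnv → List Kind → Ctx → Expr → Ty → Ctx → Prop
  | const : typeofConst pe c = some T → ExpSynth pe Δ Γ (.const c) T Γ
  | var : KindCheck pe Δ T .ty →
      ExpSynth pe Δ (Γ ++ ([(x, .lin, T)] : Ctx)) (.var x) T Γ
  | varU : KindCheck pe Δ T .ty →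
      ExpSynth pe Δ (Γ ++ ([(x, .un, T)] : Ctx)) (.var x) T (Γ ++ ([(x, .un, T)] : Ctx))
  | letU : ExpCheck pe Δ Γ₁ e₁ .unit Γ₂ → ExpSynth pe Δ Γ₂ e₂ T Γ₃ →
      ExpSynth pe Δ Γ₁ (.letunit e₁ e₂) T Γ₃
  | abs : KindCheck pe Δ T .ty → nfP T = V →
      ExpSynth pe Δ (Γ₁ ++ ([(x, .lin, V)] : Ctx)) e U Γ₂ → notIn x Γ₂ →
      ExpSynth pe Δ Γ₁ (.abs x T e) (.arr V U) Γ₂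
  | app : ExpSynth pe Δ Γ₁ e₁ (.arr T U) Γ₂ → ExpCheck pe Δ Γ₂ e₂ T Γ₃ →
      ExpSynth pe Δ Γ₁ (.app e₁ e₂) U Γ₃
  | pair : ExpSynth pe Δ Γ₁ e₁ T Γ₂ → ExpSynth pe Δ Γ₂ e₂ U Γ₃ →
      ExpSynth pe Δ Γ₁ (.pair e₁ e₂) (.pair T U) Γ₃
  | rec' : KindCheck pe Δ T .ty → nfP (.arr T U) = V →
      ExpCheck pe Δ (Γ ++ ([(x, .un, V)] : Ctx)) v V (Γ ++ ([(x, .un, V)] : Ctx)) →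
      ExpSynth pe Δ Γ (.rec' x (.arr T U) v) V Γ
  | tabs : ExpSynth pe (κ :: Δ) Γ₁ v T Γ₂ →
      ExpSynth pe Δ Γ₁ (.tabs κ v) (.all κ T) Γ₂
  | tapp : ExpSynth pe Δ Γ₁ e (.all κ U) Γ₂ → KindCheck pe Δ T κ →
      ExpSynth pe Δ Γ₁ (.tapp e T) (nfP (substTy0 T U)) Γ₂
  | letP : ExpSynth pe Δ Γ₁ e₁ (.pair T U) Γ₂ →
      ExpSynth pe Δ (Γ₂ ++ ([(x, .lin, nfP T), (y, .lin, nfP U)] : Ctx)) e₂ V Γ₃ →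
      notIn x Γ₃ → notIn y Γ₃ →
      ExpSynth pe Δ Γ₁ (.letpair x y e₁ e₂) V Γ₃
  | match' : pe P = some d →
      ExpSynth pe Δ Γ₁ e (.inp (.papp P Us) S) Γ₂ →
      bs.length = d.ctors.length →
      (∀ (i : ℕ) x eᵢ Ts, bs[i]? = some (x, eᵢ) → d.ctors[i]? = some Ts →
        ExpSynth pe Δ (Γ₂ ++ ([(x, .lin, nfP (matSeqNeg (Ts.map (substAll Us)) S))] : Ctx))
          eᵢ V Γ₃) →
      (∀ (i : ℕ) x eᵢ, bs[i]? = some (x, eᵢ) → notIn x Γ₃) →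
      ExpSynth pe Δ Γ₁ (.matchwith e bs) V Γ₃
/-- Algorithmic type checking Δ;Γ₁ ⊢ e ⇐ T ⊣ Γ₂ (rule E-Check; α-equivalence is = here). -/
inductive ExpCheck : PEnv → List Kind → Ctx → Expr → Ty → Ctx → Prop
  | check : ExpSynth pe Δ Γ₁ e T Γ₂ → ExpCheck pe Δ Γ₁ e T Γ₂
end

/-- Labels σ for session operations. -/
inductive SLabel where
  | recv (x : String) (v : Expr)   -- x?v
  | send (x : String) (v : Expr)   -- x!v
  | recvC (x : String) (k : ℕ)     -- x?Cₖ
  | sendC (x : String) (k : ℕ)     -- x!Cₖ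
  | close (x : String)
  | open' (x : String)

/-- Labels λ for expression transitions. -/
inductive ELabel where
  | sess (σ : SLabel)
  | beta
  | fork (v : Expr)
  | new (x y : String) (T : Ty)

/-- Labels π for process transitions. -/
inductive PLabel where
  | sess (σ : SLabel)
  | tau
  | scope (a b x c : String)       -- (νab) x!c  with c ∈ {a, b}
  | comp (π₁ π₂ : PLabel)          -- π₁ | π₂

/-- Free variables of a process label. -/
def FVL : PLabel → Set String
  | .sess (.recv x v) => {x} ∪ FVE v
  | .sess (.send x v) => {x} ∪ FVE v
  | .sess (.recvC x _) => {x}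
  | .sess (.sendC x _) => {x}
  | .sess (.close x) => {x}
  | .sess (.open' x) => {x}
  | .tau => ∅
  | .scope w x y z => {y, z} \ {w, x}
  | .comp π π' => FVL π ∪ FVL π'

/-- Labelled transition system for expressions. -/
inductive EStep : Expr → ELabel → Expr → Prop
  | app : IsValue v → EStep (.app (.abs x T e) v) .beta (esubst v x e)
  | tapp : IsValue v → EStep (.tapp (.tabs κ v) T) .beta (etsubst0 T v)
  | letP : IsValue u → IsValue v →
      EStep (.letpair x y (.pair u v) e) .beta (esubst v y (esubst u x e))
  | letU : EStep (.letunit (.const .unit) e) .beta e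
  | rec' : IsValue v → IsValue u →
      EStep (.app (.rec' x T v) u) .beta (.app (esubst (.rec' x T v) x v) u)
  | fork : IsValue v → EStep (.app (.const .fork) v) (.fork v) (.const .unit)
  | new : EStep (.tapp (.const .new) T) (.new x y T) (.pair (.var x) (.var y))
  | recv : IsValue v →
      EStep (.app (.tapp (.tapp (.const .receive) T) U) (.var x))
        (.sess (.recv x v)) (.pair v (.var x))
  | send : IsValue v →
      EStep (.app (.app (.tapp (.tapp (.const .send) T) U) v) (.var x))
        (.sess (.send x v)) (.var x)
  | match' : bs[k]? = some (y, e) →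
      EStep (.matchwith (.var x) bs) (.sess (.recvC x k)) (esubst (.var x) y e)
  | sel : EStep (.app (tappList (.const (.select P k)) Ts) (.var x))
        (.sess (.sendC x k)) (.var x)
  | wait : EStep (.app (.const .wait) (.var x)) (.sess (.close x)) (.const .unit)
  | term : EStep (.app (.const .terminate) (.var x)) (.sess (.open' x)) (.const .unit)
  -- call-by-value structural rules
  | appL : EStep e₁ l e₂ → EStep (.app e₁ e₃) l (.app e₂ e₃)
  | appR : IsValue v → EStep e₁ l e₂ → EStep (.app v e₁) l (.app v e₂)
  | tappE : EStep e₁ l e₂ → EStep (.tapp e₁ T) l (.tapp e₂ T)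
  | pairL : EStep e₁ l e₂ → EStep (.pair e₁ e₃) l (.pair e₂ e₃)
  | pairR : IsValue v → EStep e₁ l e₂ → EStep (.pair v e₁) l (.pair v e₂)
  | matchE : EStep e₁ l e₂ → EStep (.matchwith e₁ bs) l (.matchwith e₂ bs)
  | letE : EStep e₁ l e₂ → EStep (.letpair x y e₁ e₃) l (.letpair x y e₂ e₃)
  | letUE : EStep e₁ l e₂ → EStep (.letunit e₁ e₃) l (.letunit e₂ e₃)

/-- Processes. -/
inductive Proc where
  | expr (e : Expr)            -- ⟨e⟩
  | par (p q : Proc)           -- p | q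
  | nu (x y : String) (p : Proc)  -- (νxy)p

/-- Labelled transition system for processes. -/
inductive PStep : Proc → PLabel → Proc → Prop
  | session : EStep e₁ (.sess σ) e₂ → PStep (.expr e₁) (.sess σ) (.expr e₂)
  | beta : EStep e₁ .beta e₂ → PStep (.expr e₁) .tau (.expr e₂)
  | fork : EStep e₁ (.fork v) e₂ →
      PStep (.expr e₁) .tau (.par (.expr e₂) (.expr (.app v (.const .unit))))
  | new : EStep e₁ (.new x y T) e₂ → PStep (.expr e₁) .tau (.nu x y (.expr e₂))
  | joinL : PStep p₁ π₁ q₁ → PStep p₂ π₂ q₂ →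
      PStep (.par p₁ p₂) (.comp π₁ π₂) (.par q₁ q₂)
  | joinR : PStep p₁ π₁ q₁ → PStep p₂ π₂ q₂ →
      PStep (.par p₁ p₂) (.comp π₂ π₁) (.par q₁ q₂)
  | msg : PStep p₁ (.comp (.sess (.recv x v)) (.sess (.send y v))) p₂ →
      PStep (.nu x y p₁) .tau (.nu x y p₂)
  | bra : PStep p₁ (.comp (.sess (.recvC x k)) (.sess (.sendC y k))) p₂ →
      PStep (.nu x y p₁) .tau (.nu x y p₂)
  | wait : PStep p₁ (.comp (.sess (.close x)) (.sess (.open' y))) p₂ →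
      PStep (.nu x y p₁) .tau p₂
  | parL : PStep p₁ π p₂ → PStep (.par p₁ q₁) π (.par p₂ q₁)
  | parR : PStep q₁ π q₂ → PStep (.par p₁ q₁) π (.par p₁ q₂)
  | res : PStep p₁ π p₂ → x ∉ FVL π → y ∉ FVL π →
      PStep (.nu x y p₁) π (.nu x y p₂)
  | openL : PStep p₁ (.sess (.send x (.var a))) p₂ → x ≠ a → x ≠ b →
      PStep (.nu a b p₁) (.scope a b x a) p₂
  | openR : PStep p₁ (.sess (.send x (.var b))) p₂ → x ≠ a → x ≠ b →
      PStep (.nu a b p₁) (.scope a b x b) p₂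
  | closeL : PStep p₁ (.comp (.sess (.recv x (.var a))) (.scope a b y a)) p₂ →
      PStep (.nu x y p₁) .tau (.nu x y (.nu a b p₂))
  | closeR : PStep p₁ (.comp (.sess (.recv x (.var b))) (.scope a b y b)) p₂ →
      PStep (.nu x y p₁) .tau (.nu x y (.nu a b p₂))


/-- Typing rules for processes Γ ⊢ p. -/
inductive ProcTyped : PEnv → Ctx → Proc → Prop
  | expr : ExpCheck pe [] Γ e .unit [] → ProcTyped pe Γ (.expr e)
  | par : ProcTyped pe Γ₁ p₁ → ProcTyped pe Γ₂ p₂ → ProcTyped pe (Γ₁ ++ Γ₂) (.par p₁ p₂)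
  | nu : KindCheck pe [] T .se →
      ProcTyped pe (Γ ++ [(x, .lin, nfP T), (y, .lin, nfN T)]) p →
      ProcTyped pe Γ (.nu x y p)

/-- Labelled transition system for typing contexts: session labels. -/
inductive CtxStepS : PEnv → Ctx → SLabel → Ctx → Prop
  | rcv : ExpCheck pe [] Γ v T [] →
      CtxStepS pe [(x, .lin, .inp T S)] (.recv x v) (Γ ++ [(x, .lin, S)])
  | send : ExpCheck pe [] Γ v T [] →
      CtxStepS pe (Γ ++ [(x, .lin, .out T S)]) (.send x v) [(x, .lin, S)]
  | match' : pe P = some d → d.ctors[k]? = some Ts →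
      CtxStepS pe [(x, .lin, .inp (.papp P Us) S)] (.recvC x k)
        [(x, .lin, nfP (matSeqNeg (Ts.map (substAll Us)) S))]
  | sel : pe P = some d → d.ctors[k]? = some Ts →
      CtxStepS pe [(x, .lin, .out (.papp P Us) S)] (.sendC x k)
        [(x, .lin, nfP (matSeq (Ts.map (substAll Us)) S))]
  | wait : CtxStepS pe [(x, .lin, .endW)] (.close x) []
  | term : CtxStepS pe [(x, .lin, .endT)] (.open' x) []

/-- Labelled transition system for typing contexts: expression labels. -/
inductive CtxStepE : PEnv → Ctx → ELabel → Ctx → Prop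
  | sess : CtxStepS pe Γ σ Γ' → CtxStepE pe Γ (.sess σ) Γ'
  | beta : CtxStepE pe [] .beta []
  | fork : ExpCheck pe [] Γ v (.arr .unit .unit) [] → CtxStepE pe Γ (.fork v) []
  | new : CtxStepE pe [] (.new x y T) [(x, .lin, nfP T), (y, .lin, nfN T)]

/-- Labelled transition system for typing contexts: process labels. -/
inductive CtxStepP : PEnv → Ctx → PLabel → Ctx → Prop
  | sess : CtxStepS pe Γ σ Γ' → CtxStepP pe Γ (.sess σ) Γ'
  | tau : CtxStepP pe [] .tau []
  | openL : CtxStepP pe [(x, .lin, .out T S)] (.scope a b x a)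
      [(b, .lin, nfN T), (x, .lin, S)]
  | openR : CtxStepP pe [(x, .lin, .out T S)] (.scope a b x b)
      [(a, .lin, nfN T), (x, .lin, S)]
  | par : CtxStepP pe Γ₁ π₁ Γ₃ → CtxStepP pe Γ₂ π₂ Γ₄ →
      CtxStepP pe (Γ₁ ++ Γ₂) (.comp π₁ π₂) (Γ₃ ++ Γ₄)

/-- Completed processes: parallel compositions of unit threads ⟨()⟩ | … | ⟨()⟩. -/
inductive Completed : Proc → Prop
  | unit : Completed (.expr (.const .unit))
  | par : Completed p → Completed q → Completed (.par p q)

/-- Subterm relation on processes. -/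
inductive SubProc : Proc → Proc → Prop
  | refl : SubProc p p
  | parL : SubProc q p₁ → SubProc q (.par p₁ p₂)
  | parR : SubProc q p₂ → SubProc q (.par p₁ p₂)
  | nu : SubProc q p → SubProc q (.nu x y p)

/-- The progress set for a channel pair x, y. -/
def ProgressSet (x y : String) (π : PLabel) : Prop :=
  π = .tau ∨
  (∃ v, π = .comp (.sess (.recv x v)) (.sess (.send y v))) ∨
  (∃ k, π = .comp (.sess (.recvC x k)) (.sess (.sendC y k))) ∨
  π = .comp (.sess (.close x)) (.sess (.open' y)) ∨
  (∃ a b, π = .comp (.sess (.recv x (.var a))) (.scope a b y a)) ∨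
  (∃ a b, π = .comp (.sess (.recv x (.var b))) (.scope a b y b))

/-- A process is a deadlock if, for all its subterms of the form (νxy)p and all
transitions p →π p', the label π is not in the progress set for x, y. -/
def Deadlock (p : Proc) : Prop :=
  ∀ x y q, SubProc (.nu x y q) p → ∀ π q', PStep q π q' → ¬ ProgressSet x y π

mutual
/-- Free (de Bruijn) type variables of a type. -/
def tfv : Ty → Set ℕ
  | .unit => ∅
  | .arr T U => tfv T ∪ tfv U
  | .pair T U => tfv T ∪ tfv U
  | .all _ T => {n | n + 1 ∈ tfv T}
  | .var n => {n}
  | .neg T => tfv T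
  | .out T S => tfv T ∪ tfv S
  | .inp T S => tfv T ∪ tfv S
  | .endT => ∅
  | .endW => ∅
  | .dual S => tfv S
  | .papp _ Ts => tfvL Ts
def tfvL : List Ty → Set ℕ
  | [] => ∅
  | T :: Ts => tfv T ∪ tfvL Ts
end

mutual
/-- Number of recursive steps performed when computing nf⁺ (each node visit
counts 1, plus at most 2 steps of polarity correction at transmission nodes). -/
def nfCostP : Ty → ℕ
  | .unit => 1
  | .arr T U => nfCostP T + nfCostP U + 1
  | .pair T U => nfCostP T + nfCostP U + 1
  | .all _ T => nfCostP T + 1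
  | .var _ => 1
  | .neg T => nfCostP T + 3
  | .out T S => nfCostP T + nfCostP S + 3
  | .inp T S => nfCostP T + nfCostP S + 3
  | .endT => 1
  | .endW => 1
  | .dual S => nfCostN S + 1
  | .papp _ Ts => nfCostL Ts + 1
/-- Number of recursive steps performed when computing nf⁻. -/
def nfCostN : Ty → ℕ
  | .var _ => 1
  | .out T S => nfCostP T + nfCostN S + 3
  | .inp T S => nfCostP T + nfCostN S + 3
  | .endT => 1
  | .endW => 1
  | .dual S => nfCostP S + 1
  | T => nfCostP T + 1
def nfCostL : List Ty → ℕ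
  | [] => 0
  | T :: Ts => nfCostP T + nfCostL Ts
end

/-- Cost of comparing two types for (α-)equality: linear in their sizes. -/
def eqCost (T U : Ty) : ℕ := tsize T + tsize U

/-! The proof is an induction on the conversion derivation. Congruence rules are respected
because nf⁺ and nf⁻ are compositional, and the duality axioms hold by the defining equations
of nf⁻. The direction axioms need two facts about normal forms: `+` is absorbed by
materialization, and `−` is an involution on every nf⁺/nf⁻, since these never start with a
double negation. -/

theorem _root_.List.map_eq_map_of_getElem? {α β : Type*} {f : α → β} :
    ∀ {l l' : List α}, l.length = l'.length →
      (∀ (i : ℕ) a a', l[i]? = some a → l'[i]? = some a' → f a = f a') → l.map f = l'.map f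
  | [], [], _, _ => rfl
  | a :: l, a' :: l', hlen, h => by
    rw [List.map_cons, List.map_cons, h 0 a a' rfl rfl,
      List.map_eq_map_of_getElem? (Nat.succ.inj hlen) fun i => h (i + 1)]

theorem Ty.mat_pos (X S : Ty) : Ty.mat X.pos S = Ty.mat X S := by
  cases X <;> rfl

theorem Ty.pos_negd (X : Ty) : X.negd.pos = X.negd := by
  cases X with
  | neg U => cases U <;> rfl
  | _ => rfl

theorem Ty.negd_negd_mat (X S : Ty) : (Ty.mat X S).negd.negd = Ty.mat X S := by
  cases X <;> rfl

mutual
theorem negd_negd_nfP : ∀ T, (nfP T).negd.negd = nfP T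
  | .neg T => by rw [nfP]; exact congrArg Ty.negd (negd_negd_nfP T)
  | .out T S => by rw [nfP]; exact Ty.negd_negd_mat _ _
  | .inp T S => by rw [nfP]; exact Ty.negd_negd_mat _ _
  | .dual S => by rw [nfP]; exact negd_negd_nfN S
  | .unit | .arr _ _ | .pair _ _ | .all _ _ | .var _ | .endT | .endW | .papp _ _ => by
    simp only [nfP, Ty.negd, Ty.pos]
theorem negd_negd_nfN : ∀ T, (nfN T).negd.negd = nfN T
  | .out T S => by rw [nfN]; exact Ty.negd_negd_mat _ _
  | .inp T S => by rw [nfN]; exact Ty.negd_negd_mat _ _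
  | .dual S => by rw [nfN]; exact negd_negd_nfP S
  | .neg T => by simpa only [nfN] using negd_negd_nfP (.neg T)
  | .unit | .arr _ _ | .pair _ _ | .all _ _ | .var _ | .endT | .endW | .papp _ _ => by
    simp only [nfN, nfP, Ty.negd, Ty.pos]
end

theorem nfL_eq_map (Ts : List Ty) : nfL Ts = Ts.map nfP := by
  induction Ts with
  | nil => rw [nfL, List.map_nil]
  | cons T Ts ih => rw [nfL, ih, List.map_cons]

/-- Completeness of type equivalence via normalization: Δ ⊢ T ≡ U : κ implies
nf⁺(T) =α nf⁺(U), and for session types also nf⁻(T) =α nf⁻(U). (With de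
Bruijn indices, α-equivalence of types is plain equality.) -/
theorem nf_completeness (pe : PEnv) (Δ : List Kind) (T U : Ty) (κ : Kind)
    (h : Conv pe Δ T U κ) :
    nfP T = nfP U ∧ (κ = .se → nfN T = nfN U) := by
  induction h with
  | refl => simp
  | symm _ ih => exact ⟨ih.1.symm, fun hκ => (ih.2 hκ).symm⟩
  | trans _ _ ih₁ ih₂ => exact ⟨ih₁.1.trans ih₂.1, fun hκ => (ih₁.2 hκ).trans (ih₂.2 hκ)⟩
  | papp _ _ hlen _ ih =>
    refine ⟨?_, nofun⟩
    rw [nfP, nfP, nfL_eq_map, nfL_eq_map,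
      List.map_eq_map_of_getElem? hlen fun i T T' h₁ h₂ => (ih i T T' h₁ h₂).1]
  | outNeg | inpNeg | negNeg => simp [nfP, nfN, Ty.mat_pos, Ty.pos_negd, negd_negd_nfP]
  | _ => simp_all [nfP, nfN]

end AlgST
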